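/- arXiv:2011.08938 — 2 statements merged into one kernel-verified Lean document; each statement's English description precedes it below -/
import Mathlib

section
/- Let Γ be a reseminant graph. Then Γ is isomorphic to R̃_k for some integer k ≥ 0 if and only if Γ has two adjacent vertices each of degree 2. -/
/-- The 5-cycle `C₅` on `Fin 5`. -/
def cycle5 : SimpleGraph (Fin 5) :=
  SimpleGraph.fromRel (fun i j => j = i + 1)

instance : DecidableRel cycle5.Adj := fun i j =>
  decidable_of_iff (i ≠ j ∧ (j = i + 1 ∨ i = j + 1)) Iff.rfl

/-- Duplicating the vertex `v'` of a simple graph `G`: a new vertex (the `Sum.inr` vertex) is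
added, adjacent to `v'` and to every neighbor of `v'` in `G`. -/
def dupGraph {V : Type*} (G : SimpleGraph V) (v' : V) : SimpleGraph (V ⊕ Unit) where
  Adj x y :=
    match x, y with
    | Sum.inl a, Sum.inl b => G.Adj a b
    | Sum.inl a, Sum.inr _ => a = v' ∨ G.Adj a v'
    | Sum.inr _, Sum.inl b => b = v' ∨ G.Adj b v'
    | Sum.inr _, Sum.inr _ => False
  symm := by
    constructor
    rintro (a | a) (b | b) h
    · exact G.adj_symm h
    · exact h
    · exact h
    · exact h.elim
  loopless := by
    constructor
    rintro (a | a) h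
    · exact G.irrefl h
    · exact h.elim

instance dupGraphAdjDecidable {V : Type*} [DecidableEq V] (G : SimpleGraph V)
    [DecidableRel G.Adj] (v' : V) : DecidableRel (dupGraph G v').Adj := fun x y =>
  match x, y with
  | Sum.inl a, Sum.inl b => inferInstanceAs (Decidable (G.Adj a b))
  | Sum.inl a, Sum.inr _ => inferInstanceAs (Decidable (a = v' ∨ G.Adj a v'))
  | Sum.inr _, Sum.inl b => inferInstanceAs (Decidable (b = v' ∨ G.Adj b v'))
  | Sum.inr _, Sum.inr _ => inferInstanceAs (Decidable False)

/-- The vertex type of the reseminant graph built from `C₅` by the duplications recorded in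
the list `l` (each entry records which of the five original cycle vertices is duplicated). -/
def resemType : List (Fin 5) → Type
  | [] => Fin 5
  | _ :: l => resemType l ⊕ Unit

instance resemTypeFintype : ∀ l : List (Fin 5), Fintype (resemType l)
  | [] => inferInstanceAs (Fintype (Fin 5))
  | _ :: l => letI := resemTypeFintype l; inferInstanceAs (Fintype (resemType l ⊕ Unit))

instance resemTypeDecEq : ∀ l : List (Fin 5), DecidableEq (resemType l)
  | [] => inferInstanceAs (DecidableEq (Fin 5))
  | _ :: l => letI := resemTypeDecEq l; inferInstanceAs (DecidableEq (resemType l ⊕ Unit))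

/-- The copy, inside `resemType l`, of an original vertex of the 5-cycle. -/
def origVert : (l : List (Fin 5)) → Fin 5 → resemType l
  | [], i => i
  | _ :: l, i => Sum.inl (origVert l i)

/-- The reseminant graph obtained from the 5-cycle `C₅` by the finite sequence of vertex
duplications recorded in `l`: for `l = v :: l'`, the vertex (the copy of the original cycle
vertex) `v` is duplicated in the graph built from `l'`. -/
def resemGraph : (l : List (Fin 5)) → SimpleGraph (resemType l)
  | [] => cycle5
  | v :: l => dupGraph (resemGraph l) (origVert l v)

instance resemGraphAdjDecidable : ∀ l : List (Fin 5), DecidableRel (resemGraph l).Adj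
  | [] => inferInstanceAs (DecidableRel cycle5.Adj)
  | v :: l =>
    letI := resemGraphAdjDecidable l
    inferInstanceAs (DecidableRel (dupGraph (resemGraph l) (origVert l v)).Adj)

/-- A simple graph is *reseminant* if it is (isomorphic to) a graph obtained from the 5-cycle
`C₅` by a finite sequence of vertex duplications, each duplicating one of the five original
cycle vertices. -/
def IsReseminant {V : Type*} (Γ : SimpleGraph V) : Prop :=
  ∃ l : List (Fin 5), Nonempty (Γ ≃g resemGraph l)

/-- `R̃_n`: the reseminant graph on `n + 5` vertices obtained from `C₅` by `n` successive
duplications, all duplicating the same fixed vertex `0` of the original 5-cycle. -/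
def tildeR (n : ℕ) : SimpleGraph (resemType (List.replicate n 0)) :=
  resemGraph (List.replicate n 0)

/-!
A reseminant graph is a blow-up of `C₅`: cycle vertex `i` is replaced by a clique of size
`mᵢ ≥ 1` (one more than the number of times `i` was duplicated), and the cliques over adjacent
cycle vertices are completely joined. A vertex over `i` has degree `mᵢ₋₁ + mᵢ + mᵢ₊₁ - 1`, and a
blow-up is determined up to isomorphism by its clique sizes. So a vertex of degree `2` forces
`mᵢ₋₁ = mᵢ = mᵢ₊₁ = 1`. Two adjacent such vertices cannot lie in one clique (it would have size
at least `2`), hence lie over adjacent cycle vertices `i` and `i + 1`, and then every size except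
`mᵢ₊₃` is `1`: after rotating the cycle this is `R̃_k` with `k = mᵢ₊₃ - 1`. Conversely, in `R̃_k`
the two cycle vertices opposite the duplicated one are adjacent and of degree `2`.
-/

namespace SimpleGraph

variable {V V' W W' : Type*}

def IsBlowup (H : SimpleGraph V) (G : SimpleGraph W) (p : V → W) : Prop :=
  ∀ x y, H.Adj x y ↔ x ≠ y ∧ (p x = p y ∨ G.Adj (p x) (p y))

theorem isBlowup_id (G : SimpleGraph W) : G.IsBlowup G id := fun _ _ =>
  ⟨fun h => ⟨h.ne, Or.inr h⟩, fun ⟨hne, h⟩ => h.resolve_left hne⟩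

namespace IsBlowup

variable {H : SimpleGraph V} {G : SimpleGraph W} {p : V → W}

theorem dupGraph (hH : H.IsBlowup G p) (v : V) :
    (dupGraph H v).IsBlowup G (Sum.elim p fun _ => p v) := by
  rintro (a | a) (b | b)
  · simp [_root_.dupGraph, hH a b]
  · show a = v ∨ H.Adj a v ↔ _
    by_cases hav : a = v
    · simp [hav]
    · simp [hH a v, hav]
  · show b = v ∨ H.Adj b v ↔ _
    by_cases hbv : b = v
    · simp [hbv]
    · simp [hH b v, hbv, eq_comm, G.adj_comm]
  · simp [_root_.dupGraph]

theorem comp_iso {G' : SimpleGraph W'} (hH : H.IsBlowup G p) (φ : G ≃g G') :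
    H.IsBlowup G' (φ ∘ p) := by
  intro x y
  rw [hH, Function.comp_apply, Function.comp_apply, φ.map_adj_iff, φ.apply_eq_iff_eq]

theorem nonempty_iso [Fintype V] [Fintype V'] [DecidableEq W] {H' : SimpleGraph V'}
    {p' : V' → W} (hH : H.IsBlowup G p) (hH' : H'.IsBlowup G p')
    (hcard : ∀ w, Fintype.card {x // p x = w} = Fintype.card {x // p' x = w}) :
    Nonempty (H ≃g H') := by
  let e := Equiv.ofFiberEquiv fun w => Fintype.equivOfCardEq (hcard w)
  refine ⟨⟨e, fun {x y} => ?_⟩⟩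
  simp only [hH x y, hH' (e x) (e y), e, Equiv.ofFiberEquiv_map, e.injective.ne_iff]

theorem degree_add_one [Fintype V] [DecidableRel H.Adj] [Fintype W] [DecidableEq W]
    [DecidableRel G.Adj] (hH : H.IsBlowup G p) (x : V) :
    H.degree x + 1 =
      ∑ w ∈ insert (p x) (G.neighborFinset (p x)), Fintype.card {y // p y = w} := by
  classical
  have hclosed : insert x (H.neighborFinset x) =
      Finset.univ.filter fun y => p y ∈ insert (p x) (G.neighborFinset (p x)) := by
    ext y
    by_cases hyx : y = x
    · simp [hyx]
    · simp [hH x y, Ne.symm hyx, eq_comm]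
  rw [← card_neighborFinset_eq_degree,
    ← Finset.card_insert_of_notMem (H.notMem_neighborFinset_self x), hclosed,
    Finset.card_eq_sum_card_fiberwise (f := p) (t := insert (p x) (G.neighborFinset (p x)))
      (fun y hy => by simpa using hy)]
  refine Finset.sum_congr rfl fun w hw => ?_
  rw [Fintype.card_subtype, Finset.filter_filter]
  congr 1
  ext y
  simp only [Finset.mem_filter, Finset.mem_univ, true_and, and_iff_right_iff_imp]
  rintro rfl
  exact hw

end IsBlowup

theorem Iso.exists_adj_degree_eq [Fintype V] [Fintype W]
    {G : SimpleGraph V} {G' : SimpleGraph W} [DecidableRel G.Adj] [DecidableRel G'.Adj]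
    (e : G ≃g G') {m n : ℕ} (h : ∃ a b, G.Adj a b ∧ G.degree a = m ∧ G.degree b = n) :
    ∃ a b, G'.Adj a b ∧ G'.degree a = m ∧ G'.degree b = n := by
  obtain ⟨a, b, hab, ha, hb⟩ := h
  exact ⟨e a, e b, e.map_adj_iff.2 hab, by rw [e.degree_eq, ha], by rw [e.degree_eq, hb]⟩

end SimpleGraph

theorem cycle5_adj_iff {i j : Fin 5} : cycle5.Adj i j ↔ j = i + 1 ∨ i = j + 1 := by
  revert i j; decide

def cycle5Rotate (c : Fin 5) : cycle5 ≃g cycle5 where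
  toEquiv := Equiv.subRight c
  map_rel_iff' {i j} := by revert i j c; decide

theorem insert_neighborFinset_cycle5 (i : Fin 5) :
    insert i (cycle5.neighborFinset i) = {i, i + 1, i - 1} := by
  revert i; decide

def resemProj : (l : List (Fin 5)) → resemType l → Fin 5
  | [] => id
  | v :: l => Sum.elim (resemProj l) fun _ => v

theorem resemProj_origVert (l : List (Fin 5)) (i : Fin 5) : resemProj l (origVert l i) = i := by
  induction l with
  | nil => rfl
  | cons _ l ih => exact ih

theorem isBlowup_resemGraph (l : List (Fin 5)) :
    (resemGraph l).IsBlowup cycle5 (resemProj l) := by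
  induction l with
  | nil => exact SimpleGraph.isBlowup_id cycle5
  | cons v l ih =>
    have := ih.dupGraph (origVert l v)
    rwa [resemProj_origVert] at this

theorem card_fiber_resemProj (l : List (Fin 5)) (i : Fin 5) :
    Fintype.card {x // resemProj l x = i} = l.count i + 1 := by
  induction l with
  | nil => exact Fintype.card_eq_one_iff.2 ⟨⟨i, rfl⟩, fun x => Subtype.ext x.2⟩
  | cons v l ih =>
    calc Fintype.card {x // resemProj (v :: l) x = i}
        = Fintype.card ({x // resemProj l x = i} ⊕ {_u : Unit // v = i}) :=
          Fintype.card_congr (Equiv.subtypeSum (α := resemType l) (β := Unit)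
            (p := fun x => Sum.elim (resemProj l) (fun _ => v) x = i))
      _ = (v :: l).count i + 1 := by
        rw [Fintype.card_sum, ih, List.count_cons]
        by_cases hvi : v = i <;> simp [hvi]

namespace SimpleGraph.IsBlowup

variable {V : Type*} {H : SimpleGraph V} {p : V → Fin 5} [Fintype V]

theorem degree_add_one_cycle5 [DecidableRel H.Adj] (hH : H.IsBlowup cycle5 p) (x : V) :
    H.degree x + 1 = Fintype.card {y // p y = p x} + Fintype.card {y // p y = p x + 1} +
      Fintype.card {y // p y = p x - 1} := by
  have hdistinct : ∀ i : Fin 5, i ∉ ({i + 1, i - 1} : Finset (Fin 5)) ∧ i + 1 ≠ i - 1 := by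
    decide
  rw [hH.degree_add_one, insert_neighborFinset_cycle5, Finset.sum_insert (hdistinct _).1,
    Finset.sum_pair (hdistinct _).2, add_assoc]

theorem card_fiber_eq_one_of_degree_eq_two [DecidableRel H.Adj] (hH : H.IsBlowup cycle5 p)
    (hpos : ∀ i, 0 < Fintype.card {x // p x = i}) {x : V} (hx : H.degree x = 2) :
    Fintype.card {y // p y = p x} = 1 ∧ Fintype.card {y // p y = p x + 1} = 1 ∧
      Fintype.card {y // p y = p x - 1} = 1 := by
  have := hH.degree_add_one_cycle5 x
  have := hpos (p x)
  have := hpos (p x + 1)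
  have := hpos (p x - 1)
  omega

theorem exists_forall_ne_card_fiber_eq_one [DecidableRel H.Adj] (hH : H.IsBlowup cycle5 p)
    (hpos : ∀ i, 0 < Fintype.card {x // p x = i}) {a b : V} (hab : H.Adj a b)
    (ha : H.degree a = 2) (hb : H.degree b = 2) :
    ∃ c, ∀ i ≠ c, Fintype.card {x // p x = i} = 1 := by
  wlog hba : p b = p a + 1 generalizing a b
  · obtain ⟨hne, hpab | hcycle⟩ := (hH a b).1 hab
    · have hsub := Fintype.card_le_one_iff.1
        (hH.card_fiber_eq_one_of_degree_eq_two hpos ha).1.le ⟨a, rfl⟩ ⟨b, hpab.symm⟩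
      exact absurd (congrArg Subtype.val hsub) hne
    · rcases cycle5_adj_iff.1 hcycle with h | h
      · exact this hab ha hb h
      · exact this hab.symm hb ha h
  obtain ⟨ha₀, ha₁, ha₂⟩ := hH.card_fiber_eq_one_of_degree_eq_two hpos ha
  obtain ⟨-, hb₁, -⟩ := hH.card_fiber_eq_one_of_degree_eq_two hpos hb
  rw [hba] at hb₁
  have hcover : ∀ i j : Fin 5, j ≠ i + 3 → j = i ∨ j = i + 1 ∨ j = i - 1 ∨ j = i + 1 + 1 := by
    decide
  refine ⟨p a + 3, fun i hi => ?_⟩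
  rcases hcover (p a) i hi with rfl | rfl | rfl | rfl <;> assumption

theorem exists_adj_degree_eq_two [DecidableRel H.Adj] (hH : H.IsBlowup cycle5 p) {c : Fin 5}
    (hc : ∀ i ≠ c, Fintype.card {x // p x = i} = 1) :
    ∃ a b, H.Adj a b ∧ H.degree a = 2 ∧ H.degree b = 2 := by
  have hshift : ∀ c : Fin 5, c + 2 ≠ c + 3 ∧ cycle5.Adj (c + 2) (c + 3) ∧
      c + 2 ≠ c ∧ c + 3 ≠ c ∧ c + 2 + 1 ≠ c ∧ c + 2 - 1 ≠ c ∧ c + 3 + 1 ≠ c ∧ c + 3 - 1 ≠ c := by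
    decide
  obtain ⟨h23, hadj, h2, h3, h21, h2', h31, h3'⟩ := hshift c
  obtain ⟨⟨a, ha⟩, -⟩ := Fintype.card_eq_one_iff.1 (hc _ h2)
  obtain ⟨⟨b, hb⟩, -⟩ := Fintype.card_eq_one_iff.1 (hc _ h3)
  have hdega := hH.degree_add_one_cycle5 a
  have hdegb := hH.degree_add_one_cycle5 b
  rw [ha, hc _ h2, hc _ h21, hc _ h2'] at hdega
  rw [hb, hc _ h3, hc _ h31, hc _ h3'] at hdegb
  refine ⟨a, b, (hH a b).2 ⟨fun h => h23 ?_, Or.inr (ha ▸ hb ▸ hadj)⟩, by omega, by omega⟩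
  rw [← ha, ← hb, h]

theorem nonempty_iso_tildeR (hH : H.IsBlowup cycle5 p) {c : Fin 5}
    (hc : ∀ i ≠ c, Fintype.card {x // p x = i} = 1) (hpos : 0 < Fintype.card {x // p x = c}) :
    Nonempty (H ≃g tildeR (Fintype.card {x // p x = c} - 1)) := by
  refine (hH.comp_iso (cycle5Rotate c)).nonempty_iso (isBlowup_resemGraph _) fun i => ?_
  have hrot : Fintype.card {x // (cycle5Rotate c ∘ p) x = i} =
      Fintype.card {x // p x = i + c} :=
    Fintype.card_congr (Equiv.subtypeEquivRight fun _ => sub_eq_iff_eq_add)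
  rw [hrot, card_fiber_resemProj, List.count_replicate]
  by_cases hi : i = 0
  · subst hi
    simp only [zero_add, beq_self_eq_true, if_true]
    omega
  · rw [hc _ (by simpa using hi)]
    simp [Ne.symm hi]

end SimpleGraph.IsBlowup

theorem exists_adj_degree_eq_two_tildeR (k : ℕ) :
    ∃ a b, (resemGraph (List.replicate k 0)).Adj a b ∧
      (resemGraph (List.replicate k 0)).degree a = 2 ∧
      (resemGraph (List.replicate k 0)).degree b = 2 :=
  (isBlowup_resemGraph _).exists_adj_degree_eq_two (c := 0) fun i hi => by
    rw [card_fiber_resemProj, List.count_replicate]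
    simp [Ne.symm hi]

theorem exists_iso_tildeR_of_exists_adj_degree_eq_two (l : List (Fin 5))
    (h : ∃ a b, (resemGraph l).Adj a b ∧ (resemGraph l).degree a = 2 ∧
      (resemGraph l).degree b = 2) :
    ∃ k, Nonempty (resemGraph l ≃g tildeR k) := by
  have hpos : ∀ i, 0 < Fintype.card {x // resemProj l x = i} := fun i => by
    rw [card_fiber_resemProj]
    omega
  obtain ⟨a, b, hab, ha, hb⟩ := h
  obtain ⟨c, hc⟩ := (isBlowup_resemGraph l).exists_forall_ne_card_fiber_eq_one hpos hab ha hb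
  exact ⟨_, (isBlowup_resemGraph l).nonempty_iso_tildeR hc (hpos c)⟩

theorem isomorphic_tildeR_iff_adjacent_degree_two_general {V : Type*} [Fintype V]
    (Γ : SimpleGraph V) [DecidableRel Γ.Adj] (h : IsReseminant Γ) :
    (∃ k : ℕ, Nonempty (Γ ≃g tildeR k)) ↔
      ∃ a b : V, Γ.Adj a b ∧ Γ.degree a = 2 ∧ Γ.degree b = 2 := by
  obtain ⟨l, ⟨e⟩⟩ := h
  constructor
  · rintro ⟨k, ⟨f : Γ ≃g resemGraph (List.replicate k 0)⟩⟩
    exact f.symm.exists_adj_degree_eq (exists_adj_degree_eq_two_tildeR k)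
  · intro hΓ
    obtain ⟨k, ⟨f⟩⟩ := exists_iso_tildeR_of_exists_adj_degree_eq_two l (e.exists_adj_degree_eq hΓ)
    exact ⟨k, ⟨e.trans f⟩⟩

/-- Let `Γ` be a reseminant graph. Then `Γ` is isomorphic to `R̃_k` for some
integer `k ≥ 0` if and only if `Γ` has two adjacent vertices each of degree `2`. -/
theorem isomorphic_tildeR_iff_adjacent_degree_two {V : Type*} [Fintype V] [DecidableEq V]
    (Γ : SimpleGraph V) [DecidableRel Γ.Adj] (h : IsReseminant Γ) :
    (∃ k : ℕ, Nonempty (Γ ≃g tildeR k)) ↔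
      ∃ a b : V, Γ.Adj a b ∧ Γ.degree a = 2 ∧ Γ.degree b = 2 :=
  isomorphic_tildeR_iff_adjacent_degree_two_general Γ h
end

section
/- For every integer n ≥ 0, the characteristic polynomial of the adjacency matrix A(R̃_n) equals (x³ − (n+1)x² − (n+3)x + (3n+2))·(x+1)ⁿ·(x² + x − 1). -/
instance (n : ℕ) : DecidableRel (tildeR n).Adj :=
  resemGraphAdjDecidable (List.replicate n 0)

/-!
Write `N_c(G, o)` for `xI - A(G)` with `c` times the indicator of the closed neighbourhood of `o`
subtracted from row `o`. When `o` is duplicated, subtracting the column of `o` from the column of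
the new vertex and then adding the row of the new vertex to row `o` leaves `(x + 1)` times a unit
vector in the new column and subtracts the closed neighbourhood of `o` once more from row `o`;
hence `det N_c(dup G o, o) = (x + 1) det N_{c+1}(G, o)`. Starting from `c = 0`, the
characteristic polynomial of `R̃_n` is thus `(x + 1)ⁿ det N_n(C₅, 0)`, an explicit `5 × 5`
determinant.
-/

section DupGraph

variable {V : Type*} (G : SimpleGraph V) (o : V)

@[simp]
theorem dupGraph_adj_inl_inl (a b : V) : (dupGraph G o).Adj (.inl a) (.inl b) ↔ G.Adj a b :=
  Iff.rfl

@[simp]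
theorem dupGraph_adj_inl_inr (a : V) (u : Unit) :
    (dupGraph G o).Adj (.inl a) (.inr u) ↔ a = o ∨ G.Adj a o :=
  Iff.rfl

@[simp]
theorem dupGraph_adj_inr_inl (b : V) (u : Unit) :
    (dupGraph G o).Adj (.inr u) (.inl b) ↔ b = o ∨ G.Adj b o :=
  Iff.rfl

@[simp]
theorem dupGraph_not_adj_inr_inr (u u' : Unit) : ¬(dupGraph G o).Adj (.inr u) (.inr u') :=
  id

end DupGraph

theorem cycle5_adj {i j : Fin 5} : cycle5.Adj i j ↔ i ≠ j ∧ (j = i + 1 ∨ i = j + 1) :=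
  Iff.rfl

namespace SimpleGraph

open Polynomial Matrix

variable {R : Type*} [CommRing R]

section RowPerturbed

variable {V : Type*} [Fintype V] [DecidableEq V] (G : SimpleGraph V) [DecidableRel G.Adj]

noncomputable def rowPerturbedCharmatrix (o : V) (c : R) : Matrix V V R[X] :=
  charmatrix (G.adjMatrix R) - of fun i j => if i = o ∧ (j = o ∨ G.Adj j o) then C c else 0

@[simp]
theorem rowPerturbedCharmatrix_zero (o : V) :
    G.rowPerturbedCharmatrix o (0 : R) = charmatrix (G.adjMatrix R) := by
  ext i j : 1
  simp [rowPerturbedCharmatrix]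

theorem det_rowPerturbedCharmatrix_dupGraph (o : V) (c : R) :
    ((dupGraph G o).rowPerturbedCharmatrix (.inl o) c).det =
      (X + 1) * (G.rowPerturbedCharmatrix o (c + 1)).det := by
  set M := (dupGraph G o).rowPerturbedCharmatrix (.inl o) c
  have hne : (.inr () : V ⊕ Unit) ≠ .inl o := Sum.inr_ne_inl
  set M₁ := M.updateCol (.inr ()) fun k => M k (.inr ()) + (-1 : R[X]) • M k (.inl o)
  set M₂ := M₁.updateRow (.inl o) (M₁ (.inl o) + (1 : R[X]) • M₁ (.inr ()))
  have hM₂ : M₂ = fromBlocks (G.rowPerturbedCharmatrix o (c + 1)) 0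
      (of fun _ j => -if j = o ∨ G.Adj j o then 1 else 0) (scalar Unit (X + 1)) := by
    ext (a | _) (b | _) : 1 <;>
      simp [M₂, M₁, M, rowPerturbedCharmatrix, updateRow_apply, charmatrix_apply,
        diagonal_apply, adjMatrix_apply] <;>
      split_ifs <;> simp_all <;> ring
  calc M.det = M₂.det := by
        rw [det_updateRow_add_smul_self _ hne.symm, det_updateCol_add_smul_self _ hne]
    _ = (X + 1) * (G.rowPerturbedCharmatrix o (c + 1)).det := by
        rw [hM₂, det_fromBlocks_zero₁₂]
        simp [mul_comm]

end RowPerturbed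

theorem det_rowPerturbedCharmatrix_resemGraph_replicate (n : ℕ) (v : Fin 5) (c : R) :
    ((resemGraph (.replicate n v)).rowPerturbedCharmatrix (origVert _ v) c).det =
      (X + 1) ^ n * (cycle5.rowPerturbedCharmatrix v (c + n)).det := by
  induction n generalizing c with
  | zero =>
    rw [pow_zero, one_mul, Nat.cast_zero, add_zero]
    rfl
  | succ n ih =>
    rw [List.replicate_succ]
    refine (det_rowPerturbedCharmatrix_dupGraph _ _ c).trans ?_
    rw [ih, pow_succ, Nat.cast_succ, add_assoc, add_comm 1 (n : R)]
    ring

theorem det_rowPerturbedCharmatrix_cycle5 (c : R) :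
    (cycle5.rowPerturbedCharmatrix 0 c).det =
      (X ^ 3 - C (c + 1) * X ^ 2 - C (c + 3) * X + C (3 * c + 2)) * (X ^ 2 + X - 1) := by
  have h : cycle5.rowPerturbedCharmatrix 0 c =
      !![X - C c, -1 - C c, 0, 0, -1 - C c;
         -1, X, -1, 0, 0;
         0, -1, X, -1, 0;
         0, 0, -1, X, -1;
         -1, 0, 0, -1, X] := by
    ext i j : 1
    fin_cases i <;> fin_cases j <;>
      simp +decide [rowPerturbedCharmatrix, adjMatrix_apply, cycle5_adj]
  rw [h]
  simp [det_succ_row_zero, Fin.sum_univ_succ, Fin.succAbove]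
  simp only [map_ofNat]
  ring

end SimpleGraph

open Polynomial in
/-- For every integer `n ≥ 0`, the characteristic polynomial of the
adjacency matrix `A(R̃_n)` equals
`(x³ − (n+1)x² − (n+3)x + (3n+2)) · (x+1)ⁿ · (x² + x − 1)`. -/
theorem charpoly_tildeR (n : ℕ) :
    ((tildeR n).adjMatrix ℝ).charpoly =
      (X ^ 3 - C ((n : ℝ) + 1) * X ^ 2 - C ((n : ℝ) + 3) * X + C (3 * (n : ℝ) + 2)) *
        (X + 1) ^ n * (X ^ 2 + X - 1) := by
  rw [Matrix.charpoly, ← SimpleGraph.rowPerturbedCharmatrix_zero _ (origVert _ 0)]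
  refine (SimpleGraph.det_rowPerturbedCharmatrix_resemGraph_replicate n 0 (0 : ℝ)).trans ?_
  rw [zero_add, SimpleGraph.det_rowPerturbedCharmatrix_cycle5]
  ring
end
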